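/- Let T be the operator defined, for θ the Fourier transform of ψ ∈ L¹(ℝ) with θ(0) = 0, by Tθ = Fourier transform of φ where φ(t) = t^{-2}ψ(1/t) (using the normalization f̂(ξ) = (1/√2)∫f(x)e^{-πixξ}dx). Then T∘T = Id on this class, i.e. (T∘T)θ = θ. -/

import Mathlib

open MeasureTheory Real

/-- The Fourier transform with the normalization `f̂(ξ) = (1/√2) ∫ f(x) e^{-πixξ} dx`. -/
noncomputable def Fhat (f : ℝ → ℂ) (ξ : ℝ) : ℂ :=
  (1 / Real.sqrt 2 : ℝ) • ∫ x : ℝ, f x * Complex.exp (-π * Complex.I * x * ξ)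

/-- The operator `T`: if `θ = ψ̂` with `ψ ∈ L¹` and `θ(0) = 0`, then
`Tθ(ξ) = (1/√2) ∫ ψ(t) e^{-πiξ/t} dt`, which is the Fourier transform of
`φ(t) = t^{-2} ψ(1/t)`. -/
noncomputable def Tmap (ψ : ℝ → ℂ) (ξ : ℝ) : ℂ :=
  (1 / Real.sqrt 2 : ℝ) • ∫ t : ℝ, ψ t * Complex.exp (-π * Complex.I * ξ / t)

lemma exp_norm_one (c t : ℝ) : ‖Complex.exp ((c : ℂ) * Complex.I / (t : ℂ))‖ = 1 := by
  have : (c : ℂ) * Complex.I / (t : ℂ) = ((c / t : ℝ) : ℂ) * Complex.I := by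
    push_cast; ring
  rw [this, Complex.norm_exp_ofReal_mul_I]

lemma split_integral (f : ℝ → ℂ) (hf : Integrable f) :
    (∫ x : ℝ, f x) = (∫ x in Set.Iio (0:ℝ), f x) + ∫ x in Set.Ioi (0:ℝ), f x := by
  have hae : ((Set.Iio (0:ℝ) ∪ Set.Ioi (0:ℝ) : Set ℝ)) =ᵐ[volume] (Set.univ : Set ℝ) := by
    rw [Set.Iio_union_Ioi]
    refine MeasureTheory.ae_eq_univ.2 ?_
    simpa using measure_singleton (0:ℝ)
  rw [← setIntegral_univ, ← setIntegral_congr_set hae,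
    setIntegral_union (((Set.Iic_disjoint_Ioi le_rfl).mono_left Set.Iio_subset_Iic_self)) measurableSet_Ioi
      hf.integrableOn hf.integrableOn]

lemma subst_aux (ψ φ : ℝ → ℂ)
    (hφ : ∀ t : ℝ, t ≠ 0 → φ t = ψ (1/t) / ((t:ℂ) ^ 2)) (ξ : ℝ)
    (s : Set ℝ) (hs : MeasurableSet s) (h0 : (0:ℝ) ∉ s)
    (himg : (fun t : ℝ => t⁻¹) '' s = s) :
    (∫ t in s, φ t * Complex.exp (-π * Complex.I * ξ / t))
      = ∫ x in s, ψ x * Complex.exp (-π * Complex.I * x * ξ) := by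
  have key := integral_image_eq_integral_abs_deriv_smul (f := fun t : ℝ => t⁻¹)
    (f' := fun t : ℝ => -(t ^ 2)⁻¹) hs
    (fun t ht => (hasDerivAt_inv (fun h => h0 (h ▸ ht))).hasDerivWithinAt)
    (inv_injective.injOn)
    (fun x => ψ x * Complex.exp (-π * Complex.I * x * ξ))
  rw [himg] at key
  rw [key]
  refine setIntegral_congr_fun hs (fun t ht => ?_)
  have htne : t ≠ 0 := fun h => h0 (h ▸ ht)
  have htc : (t : ℂ) ≠ 0 := by exact_mod_cast htne
  rw [hφ t htne]
  have habs : |(-(t ^ 2)⁻¹)| = (t ^ 2)⁻¹ := by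
    rw [abs_neg, abs_inv, abs_pow, sq_abs]
  rw [habs]
  have hexp : Complex.exp (-π * Complex.I * (t⁻¹ : ℝ) * ξ)
      = Complex.exp (-π * Complex.I * ξ / t) := by
    congr 1
    push_cast
    field_simp
  rw [hexp, Complex.real_smul]
  push_cast
  field_simp

/-- `T ∘ T = Id`: with `θ = ψ̂` (`ψ ∈ L¹`, `θ(0) = 0`, i.e. `∫ψ = 0`) and
`φ(t) = t^{-2}ψ(1/t)`, one has `Tθ = φ̂` and `(T∘T)θ = Tφ̂ = Tmap φ = ψ̂ = θ`. -/
theorem Top_involutive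
    (ψ : ℝ → ℂ) (hψ : Integrable ψ) (hmean : (∫ x : ℝ, ψ x) = 0)
    (φ : ℝ → ℂ) (hφint : Integrable φ)
    (hφ : ∀ t : ℝ, t ≠ 0 → φ t = ψ (1/t) / ((t:ℂ) ^ 2)) :
    ∀ ξ : ℝ, Tmap φ ξ = Fhat ψ ξ := by
  intro ξ
  unfold Tmap Fhat
  congr 1
  -- integrability of the two products
  have hgint : Integrable (fun x : ℝ => ψ x * Complex.exp (-π * Complex.I * x * ξ)) := by
    have h1 : Integrable (fun x : ℝ => Complex.exp (-π * Complex.I * x * ξ) * ψ x) := by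
      refine Integrable.bdd_mul (c := 1) hψ ?_ (Filter.Eventually.of_forall fun x => ?_)
      · exact (Complex.measurable_exp.comp
          (((Complex.measurable_ofReal.const_mul (-π * Complex.I)).mul_const
            (ξ : ℂ)))).aestronglyMeasurable
      · have : (-π : ℂ) * Complex.I * x * ξ = ((-π * x * ξ : ℝ) : ℂ) * Complex.I / ((1:ℝ) : ℂ) := by
          push_cast; ring
        rw [this]
        exact le_of_eq (exp_norm_one (-π * x * ξ) 1)
    exact h1.congr (Filter.Eventually.of_forall fun x => mul_comm _ _)
  have hhint : Integrable (fun t : ℝ => φ t * Complex.exp (-π * Complex.I * ξ / t)) := by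
    have h1 : Integrable (fun t : ℝ => Complex.exp (-π * Complex.I * ξ / t) * φ t) := by
      refine Integrable.bdd_mul (c := 1) hφint ?_ (Filter.Eventually.of_forall fun t => ?_)
      · exact (Complex.measurable_exp.comp
          ((measurable_const.div Complex.measurable_ofReal))).aestronglyMeasurable
      · have : (-π : ℂ) * Complex.I * ξ / t = ((-π * ξ : ℝ) : ℂ) * Complex.I / ((t:ℝ) : ℂ) := by
          push_cast; ring
        rw [this]
        exact le_of_eq (exp_norm_one (-π * ξ) t)
    exact h1.congr (Filter.Eventually.of_forall fun t => mul_comm _ _)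
  rw [split_integral _ hhint, split_integral _ hgint]
  have himgIoi : (fun t : ℝ => t⁻¹) '' Set.Ioi 0 = Set.Ioi 0 := by
    ext x
    constructor
    · rintro ⟨t, ht, rfl⟩; exact inv_pos.2 (Set.mem_Ioi.1 ht)
    · intro hx; exact ⟨x⁻¹, Set.mem_Ioi.2 (inv_pos.2 (Set.mem_Ioi.1 hx)), inv_inv x⟩
  have himgIio : (fun t : ℝ => t⁻¹) '' Set.Iio 0 = Set.Iio 0 := by
    ext x
    constructor
    · rintro ⟨t, ht, rfl⟩; exact Set.mem_Iio.2 (inv_lt_zero.2 (Set.mem_Iio.1 ht))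
    · intro hx
      exact ⟨x⁻¹, Set.mem_Iio.2 (inv_lt_zero.2 (Set.mem_Iio.1 hx)), inv_inv x⟩
  rw [subst_aux ψ φ hφ ξ _ measurableSet_Ioi (by simp) himgIoi,
    subst_aux ψ φ hφ ξ _ measurableSet_Iio (by simp) himgIio]
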